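/- arXiv:2001.01712 — 2 statements merged into one kernel-verified Lean document; each statement's English description precedes it below -/
import Mathlib

section
/- Let a_{ij} : ℝⁿ → ℝ (1 ≤ i,j ≤ n) be C¹ and ℤⁿ-periodic, and let r : ℝⁿ → (0,∞) be C¹ and ℤⁿ-periodic. Assume that for every j ∈ {1,…,n}, Σ_{i=1}^n ∂_{y_i}(a_{ij}(y) r(y)) = 0 for all y ∈ ℝⁿ. Then for every C¹, ℤⁿ-periodic function v : ℝⁿ → ℝ and every j ∈ {1,…,n}, ∫_{[0,1]ⁿ} Σ_{i=1}^n a_{ij}(y) ∂_{y_i}v(y) r(y) dy = 0. (In particular, all the coefficients c^{kl}_j := ∫_{[0,1]ⁿ} a_{ij} ∂_{y_i}v^{kl} r dy built from correctors v^{kl} of A vanish.) -/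
open MeasureTheory

/-- The unit cube `[0,1]^n` in `ℝ^n`. -/
def unitCube (n : ℕ) : Set (Fin n → ℝ) := Set.Icc 0 1

/-- Partial derivative `∂_{y_i} f`. -/
noncomputable def pd {n : ℕ} (f : (Fin n → ℝ) → ℝ) (i : Fin n) : (Fin n → ℝ) → ℝ :=
  fun y => fderiv ℝ f y (Pi.single i 1)

/-- Second partial derivative `∂_{y_i} ∂_{y_j} f`. -/
noncomputable def pd2 {n : ℕ} (f : (Fin n → ℝ) → ℝ) (i j : Fin n) : (Fin n → ℝ) → ℝ :=
  pd (pd f j) i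

/-- Third partial derivative `∂_{y_i} ∂_{y_j} ∂_{y_k} f`. -/
noncomputable def pd3 {n : ℕ} (f : (Fin n → ℝ) → ℝ) (i j k : Fin n) : (Fin n → ℝ) → ℝ :=
  pd (pd (pd f k) j) i

/-- `ℤ^n`-periodicity. -/
def ZPeriodic {n : ℕ} (f : (Fin n → ℝ) → ℝ) : Prop :=
  ∀ (y : Fin n → ℝ) (z : Fin n → ℤ), f (y + fun i => (z i : ℝ)) = f y

/-- Admissible matrix field: C², periodic, symmetric, uniformly elliptic. -/
def IsAdmissible {n : ℕ} (a : Fin n → Fin n → (Fin n → ℝ) → ℝ) : Prop :=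
  (∀ i j, ContDiff ℝ 2 (a i j)) ∧
  (∀ i j, ZPeriodic (a i j)) ∧
  (∀ i j y, a i j y = a j i y) ∧
  ∃ lam Lam : ℝ, 0 < lam ∧ lam ≤ Lam ∧
    ∀ (y ξ : Fin n → ℝ),
      lam * (∑ i, ξ i ^ 2) ≤ ∑ i, ∑ j, a i j y * ξ i * ξ j ∧
      ∑ i, ∑ j, a i j y * ξ i * ξ j ≤ Lam * (∑ i, ξ i ^ 2)

/-- Corrector pair `(v^{kl}, ā_{kl})`. -/
def IsCorrector {n : ℕ} (a : Fin n → Fin n → (Fin n → ℝ) → ℝ)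
    (k l : Fin n) (v : (Fin n → ℝ) → ℝ) (abar : ℝ) : Prop :=
  ContDiff ℝ 2 v ∧ ZPeriodic v ∧
  ∀ y, -(∑ i, ∑ j, a i j y * pd2 v i j y) - a k l y = -abar

/-- Invariant measure for the matrix field `a`. -/
def IsInvariantMeasure {n : ℕ} (a : Fin n → Fin n → (Fin n → ℝ) → ℝ)
    (r : (Fin n → ℝ) → ℝ) : Prop :=
  ContDiff ℝ 2 r ∧ ZPeriodic r ∧ (∀ y, 0 < r y) ∧
  (∀ y, ∑ i, ∑ j, pd2 (fun x => a i j x * r x) i j y = 0) ∧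
  ∫ y in unitCube n, r y = 1

/-- `u` is Cᵐ on a neighborhood of the closure of `U`, with all partial
derivatives up to order `m` bounded there. -/
def SmoothBounded {n : ℕ} (m : ℕ) (U : Set (Fin n → ℝ)) (u : (Fin n → ℝ) → ℝ) : Prop :=
  ∃ V : Set (Fin n → ℝ), IsOpen V ∧ closure U ⊆ V ∧ ContDiffOn ℝ m u V ∧
    ∀ k : ℕ, k ≤ m → ∃ M : ℝ, ∀ x ∈ V, ‖iteratedFDerivWithin ℝ k u V x‖ ≤ M

/-
Proof idea: by the product rule and the divergence-free condition,
`∑ᵢ a_{ij} ∂ᵢv · r = ∑ᵢ ∂ᵢ(a_{ij} r v)`. By the divergence theorem the integral of the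
divergence of a periodic `C¹` field over `[0,1]ⁿ` is a sum of differences of integrals over
opposite faces, and periodicity makes each difference vanish.
-/

theorem ZPeriodic.mul {n : ℕ} {f g : (Fin n → ℝ) → ℝ} (hf : ZPeriodic f) (hg : ZPeriodic g) :
    ZPeriodic (fun x => f x * g x) := fun y z => by
  simp only [hf y z, hg y z]

theorem pd_mul {n : ℕ} {f g : (Fin n → ℝ) → ℝ} {y : Fin n → ℝ}
    (hf : DifferentiableAt ℝ f y) (hg : DifferentiableAt ℝ g y) (i : Fin n) :
    pd (fun x => f x * g x) i y = f y * pd g i y + g y * pd f i y := by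
  simp only [pd, fderiv_fun_mul hf hg, add_apply,
    smul_apply, smul_eq_mul]

theorem ContDiff.continuous_pd {n : ℕ} {f : (Fin n → ℝ) → ℝ} (hf : ContDiff ℝ 1 f) (i : Fin n) :
    Continuous (pd f i) :=
  (hf.continuous_fderiv one_ne_zero).clm_apply continuous_const

/-- The front face `yᵢ = 1` of the unit cube is the back face `yᵢ = 0` shifted by `eᵢ`. -/
theorem Fin.insertNth_one_eq_insertNth_zero_add_single {m : ℕ} (i : Fin (m + 1))
    (x : Fin m → ℝ) :
    i.insertNth (1 : ℝ) x =
      i.insertNth (0 : ℝ) x + fun k => ((Pi.single i 1 : Fin (m + 1) → ℤ) k : ℝ) := by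
  funext k
  rcases eq_or_ne k i with rfl | h
  · simp
  · obtain ⟨l, rfl⟩ := Fin.exists_succAbove_eq h
    simp

theorem integral_unitCube_sum_pd_eq_zero {n : ℕ} (F : Fin n → (Fin n → ℝ) → ℝ)
    (hF : ∀ i, ContDiff ℝ 1 (F i)) (hper : ∀ i, ZPeriodic (F i)) :
    ∫ y in unitCube n, ∑ i, pd (F i) i y = 0 := by
  cases n with
  | zero => simp
  | succ m =>
    have hdivergence := integral_divergence_of_hasFDerivAt_off_countable'
      (0 : Fin (m + 1) → ℝ) 1 zero_le_one F (fun i x => fderiv ℝ (F i) x) ∅ Set.countable_empty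
      (fun i => (hF i).continuous.continuousOn)
      (fun x _ i => ((hF i).differentiable one_ne_zero x).hasFDerivAt)
      (continuous_finsetSum _ fun i _ => (hF i).continuous_pd i).integrableOn_Icc
    refine hdivergence.trans (Finset.sum_eq_zero fun i _ => sub_eq_zero.2 ?_)
    refine setIntegral_congr_fun measurableSet_Icc fun x _ => ?_
    simp only [Pi.one_apply, Pi.zero_apply, Fin.insertNth_one_eq_insertNth_zero_add_single]
    exact hper i _ _

theorem coeff_vanish_of_div_free_general {n : ℕ}
    (a : Fin n → Fin n → (Fin n → ℝ) → ℝ)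
    (ha : ∀ i j, ContDiff ℝ 1 (a i j)) (haper : ∀ i j, ZPeriodic (a i j))
    (r : (Fin n → ℝ) → ℝ) (hrC : ContDiff ℝ 1 r) (hrper : ZPeriodic r)
    (hdiv : ∀ (j : Fin n) (y : Fin n → ℝ), (∑ i, pd (fun x => a i j x * r x) i y) = 0) :
    ∀ v : (Fin n → ℝ) → ℝ, ContDiff ℝ 1 v → ZPeriodic v →
      ∀ j : Fin n, (∫ y in unitCube n, (∑ i, a i j y * pd v i y) * r y) = 0 := by
  intro v hv hvper j
  have har : ∀ i, ContDiff ℝ 1 (fun x => a i j x * r x) := fun i => (ha i j).mul hrC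
  have hintegrand : ∀ y, (∑ i, a i j y * pd v i y) * r y
      = ∑ i, pd (fun x => (a i j x * r x) * v x) i y := fun y => by
    simp only [pd_mul ((har _).differentiable one_ne_zero y) (hv.differentiable one_ne_zero y),
      Finset.sum_add_distrib, ← Finset.mul_sum, hdiv j y, mul_zero, add_zero, Finset.sum_mul]
    exact Finset.sum_congr rfl fun i _ => by ring
  simp only [hintegrand]
  exact integral_unitCube_sum_pd_eq_zero _ (fun i => (har i).mul hv)
    fun i => ((haper i j).mul hrper).mul hvper

/-- if `∂_{y_i}(a_{ij} r) = 0` for every `j`, then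
`∫ a_{ij} ∂_{y_i}v · r = 0` for every periodic `C¹` function `v` and every `j`. -/
theorem coeff_vanish_of_div_free {n : ℕ}
    (a : Fin n → Fin n → (Fin n → ℝ) → ℝ)
    (ha : ∀ i j, ContDiff ℝ 1 (a i j)) (haper : ∀ i j, ZPeriodic (a i j))
    (r : (Fin n → ℝ) → ℝ) (hrC : ContDiff ℝ 1 r) (hrper : ZPeriodic r)
    (hrpos : ∀ y, 0 < r y)
    (hdiv : ∀ (j : Fin n) (y : Fin n → ℝ), (∑ i, pd (fun x => a i j x * r x) i y) = 0) :
    ∀ v : (Fin n → ℝ) → ℝ, ContDiff ℝ 1 v → ZPeriodic v →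
      ∀ j : Fin n, (∫ y in unitCube n, (∑ i, a i j y * pd v i y) * r y) = 0 :=
  coeff_vanish_of_div_free_general a ha haper r hrC hrper hdiv
end

section
/- Let n ≥ 2. Let A⁰ = (a⁰_{ij}) be an admissible matrix field on ℝⁿ with an invariant measure r⁰, and assume Σ_{i=1}^n ∂_{y_i}(a⁰_{ij}(y) r⁰(y)) = 0 for all y ∈ ℝⁿ and every j ∈ {1,…,n}. Let ξ : ℝ → ℝ be C² and 1-periodic, let δ > 0, and define the symmetric matrix field A¹ = (a¹_{ij}) by a¹₁₁(y) := a⁰₁₁(y) + δ ξ(y₁+y₂)/r⁰(y), a¹₂₂(y) := a⁰₂₂(y) − δ ξ(y₁+y₂)/r⁰(y), and a¹_{ij} := a⁰_{ij} for all other (i,j). Then: (i) Σ_{i,j} ∂_{y_i}∂_{y_j}(a¹_{ij}(y) r⁰(y)) = 0 for all y ∈ ℝⁿ (so r⁰ still satisfies the invariant-measure equation for A¹); and (ii) Σ_{i=1}^n ∂_{y_i}(a¹_{i1}(y) r⁰(y)) = δ ξ'(y₁+y₂) for all y ∈ ℝⁿ. -/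
open MeasureTheory

/-! Multiplying by `r⁰` cancels the `1/r⁰`, so `a¹_{ij} r⁰ = a⁰_{ij} r⁰ + c_{ij} ξ(ℓ y)` with
`ℓ y = y₁ + y₂` and `c = δ (e₁e₁ᵀ - e₂e₂ᵀ)`. Derivatives of the ridge function `ξ ∘ ℓ` only see
`w = ∇ℓ = e₁ + e₂`: the second-order operator picks up `wᵀ c w · ξ'' = δ (w₁² - w₂²) ξ'' = 0`,
while the first column of the divergence picks up `(cᵀ w)₁ ξ' = δ w₁ ξ' = δ ξ'`. -/

section PartialDerivatives

variable {n : ℕ}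

lemma pd_add {f g : (Fin n → ℝ) → ℝ} {y : Fin n → ℝ}
    (hf : DifferentiableAt ℝ f y) (hg : DifferentiableAt ℝ g y) (i : Fin n) :
    pd (fun x => f x + g x) i y = pd f i y + pd g i y := by
  simp [pd, fderiv_fun_add hf hg]

lemma ContDiff.pd {f : (Fin n → ℝ) → ℝ} {m : ℕ} (hf : ContDiff ℝ (m + 1) f) (j : Fin n) :
    ContDiff ℝ m (pd f j) :=
  ((ContinuousLinearMap.apply ℝ ℝ (Pi.single j (1 : ℝ))).contDiff.comp
    (hf.fderiv_right (m := m) le_rfl) :)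

lemma pd2_add {f g : (Fin n → ℝ) → ℝ} (hf : ContDiff ℝ 2 f) (hg : ContDiff ℝ 2 g)
    (i j : Fin n) (y : Fin n → ℝ) :
    pd2 (fun x => f x + g x) i j y = pd2 f i j y + pd2 g i j y := by
  have hfg : pd (fun x => f x + g x) j = fun x => pd f j x + pd g j x := by
    funext x
    exact pd_add (hf.differentiable two_ne_zero x) (hg.differentiable two_ne_zero x) j
  rw [pd2, hfg]
  exact pd_add ((hf.pd j).differentiable one_ne_zero y) ((hg.pd j).differentiable one_ne_zero y) i

lemma pd_const_mul_comp_clm {h : ℝ → ℝ} (hh : Differentiable ℝ h)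
    (ℓ : (Fin n → ℝ) →L[ℝ] ℝ) (c : ℝ) (i : Fin n) :
    pd (fun x => c * h (ℓ x)) i = fun y => c * ℓ (Pi.single i 1) * deriv h (ℓ y) := by
  funext y
  have hd := ((hh (ℓ y)).hasDerivAt.comp_hasFDerivAt y ℓ.hasFDerivAt).const_mul c
  rw [Function.comp_def] at hd
  rw [pd, hd.fderiv]
  simp only [FunLike.coe_smul, Pi.smul_apply, smul_eq_mul]
  ring

lemma pd2_const_mul_comp_clm {h : ℝ → ℝ} (hh : ContDiff ℝ 2 h)
    (ℓ : (Fin n → ℝ) →L[ℝ] ℝ) (c : ℝ) (i j : Fin n) :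
    pd2 (fun x => c * h (ℓ x)) i j =
      fun y => c * ℓ (Pi.single j 1) * ℓ (Pi.single i 1) * deriv (deriv h) (ℓ y) := by
  have hh' : ContDiff ℝ 1 (deriv h) := (contDiff_succ_iff_deriv.mp hh).2.2
  rw [pd2, pd_const_mul_comp_clm (hh.differentiable two_ne_zero),
    pd_const_mul_comp_clm (hh'.differentiable one_ne_zero)]

end PartialDerivatives

section RidgePerturbation

variable {n : ℕ} {f g : Fin n → Fin n → (Fin n → ℝ) → ℝ} {c : Fin n → Fin n → ℝ}
  {h : ℝ → ℝ} {ℓ : (Fin n → ℝ) →L[ℝ] ℝ}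

lemma sum_pd2_add_ridge (hf : ∀ i j, ContDiff ℝ 2 (f i j)) (hh : ContDiff ℝ 2 h)
    (hg : ∀ i j x, g i j x = f i j x + c i j * h (ℓ x)) (y : Fin n → ℝ) :
    ∑ i, ∑ j, pd2 (g i j) i j y =
      ∑ i, ∑ j, pd2 (f i j) i j y +
        (∑ i, ∑ j, c i j * ℓ (Pi.single j 1) * ℓ (Pi.single i 1)) * deriv (deriv h) (ℓ y) := by
  have hridge : ∀ i j, ContDiff ℝ 2 (fun x => c i j * h (ℓ x)) :=
    fun i j => contDiff_const.mul (hh.comp ℓ.contDiff)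
  simp only [funext (hg _ _), pd2_add (hf _ _) (hridge _ _), pd2_const_mul_comp_clm hh,
    Finset.sum_add_distrib, Finset.sum_mul]

lemma sum_pd_add_ridge (hf : ∀ i j, Differentiable ℝ (f i j)) (hh : Differentiable ℝ h)
    (hg : ∀ i j x, g i j x = f i j x + c i j * h (ℓ x)) (k : Fin n) (y : Fin n → ℝ) :
    ∑ i, pd (g i k) i y =
      ∑ i, pd (f i k) i y + (∑ i, c i k * ℓ (Pi.single i 1)) * deriv h (ℓ y) := by
  have hridge : ∀ i, DifferentiableAt ℝ (fun x => c i k * h (ℓ x)) y :=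
    fun i => (differentiableAt_const _).mul ((hh _).comp y ℓ.differentiableAt)
  simp only [funext (hg _ _), pd_add (hf _ _ y) (hridge _), pd_const_mul_comp_clm hh,
    Finset.sum_add_distrib, Finset.sum_mul]

end RidgePerturbation

section PerturbationCoefficients

variable {n : ℕ} (i0 i1 : Fin n)

def sumCoords : (Fin n → ℝ) →L[ℝ] ℝ := .proj i0 + .proj i1

@[simp]
lemma sumCoords_apply (x : Fin n → ℝ) : sumCoords i0 i1 x = x i0 + x i1 := rfl

def perturbationCoeff (δ : ℝ) (i j : Fin n) : ℝ :=
  if i = i0 ∧ j = i0 then δ else if i = i1 ∧ j = i1 then -δ else 0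

variable {i0 i1}

lemma sum_sum_perturbationCoeff_mul (hne : i0 ≠ i1) (δ : ℝ) :
    ∑ i, ∑ j, perturbationCoeff i0 i1 δ i j * sumCoords i0 i1 (Pi.single j 1) *
      sumCoords i0 i1 (Pi.single i 1) = 0 := by
  rw [Fintype.sum_eq_add i0 i1 hne, Fintype.sum_eq_add i0 i1 hne, Fintype.sum_eq_add i0 i1 hne]
  · simp [perturbationCoeff, hne, hne.symm]
  all_goals simp +contextual [perturbationCoeff]

lemma sum_perturbationCoeff_mul (hne : i0 ≠ i1) (δ : ℝ) :
    ∑ i, perturbationCoeff i0 i1 δ i i0 * sumCoords i0 i1 (Pi.single i 1) = δ := by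
  rw [Fintype.sum_eq_single i0]
  · simp [perturbationCoeff, hne]
  · intro i hi
    simp [perturbationCoeff, hi, hne]

end PerturbationCoefficients

theorem perturbation_step_one_general {n : ℕ}
    (i0 i1 : Fin n) (hi0 : (i0 : ℕ) = 0) (hi1 : (i1 : ℕ) = 1)
    (a0 : Fin n → Fin n → (Fin n → ℝ) → ℝ) (hA0 : IsAdmissible a0)
    (r0 : (Fin n → ℝ) → ℝ) (hr0 : IsInvariantMeasure a0 r0)
    (hdiv0 : ∀ (j : Fin n) (y : Fin n → ℝ),
      (∑ i, pd (fun x => a0 i j x * r0 x) i y) = 0)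
    (ξ : ℝ → ℝ) (hξC : ContDiff ℝ 2 ξ)
    (δ : ℝ)
    (a1 : Fin n → Fin n → (Fin n → ℝ) → ℝ)
    (ha1_00 : ∀ y, a1 i0 i0 y = a0 i0 i0 y + δ * ξ (y i0 + y i1) / r0 y)
    (ha1_11 : ∀ y, a1 i1 i1 y = a0 i1 i1 y - δ * ξ (y i0 + y i1) / r0 y)
    (ha1_other : ∀ i j, ¬(i = i0 ∧ j = i0) → ¬(i = i1 ∧ j = i1) →
      ∀ y, a1 i j y = a0 i j y) :
    (∀ y, ∑ i, ∑ j, pd2 (fun x => a1 i j x * r0 x) i j y = 0) ∧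
    (∀ y, (∑ i, pd (fun x => a1 i i0 x * r0 x) i y) = δ * deriv ξ (y i0 + y i1)) := by
  obtain ⟨hr0C, -, hr0pos, hr0inv, -⟩ := hr0
  have hne : i0 ≠ i1 := fun h => by simp [h, hi1] at hi0
  have hsplit : ∀ i j x, a1 i j x * r0 x =
      a0 i j x * r0 x + perturbationCoeff i0 i1 δ i j * ξ (sumCoords i0 i1 x) := by
    intro i j x
    have hr : r0 x ≠ 0 := (hr0pos x).ne'
    by_cases h00 : i = i0 ∧ j = i0
    · obtain ⟨rfl, rfl⟩ := h00
      simp only [ha1_00, perturbationCoeff, and_self, if_true, sumCoords_apply]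
      field_simp
    by_cases h11 : i = i1 ∧ j = i1
    · obtain ⟨rfl, rfl⟩ := h11
      simp only [ha1_11, perturbationCoeff, hne.symm, and_self, if_true, if_false,
        sumCoords_apply]
      field_simp
      ring
    simp [perturbationCoeff, ha1_other i j h00 h11, h00, h11]
  have hC2 : ∀ i j, ContDiff ℝ 2 (fun x => a0 i j x * r0 x) := fun i j => (hA0.1 i j).mul hr0C
  refine ⟨fun y => ?_, fun y => ?_⟩
  · rw [sum_pd2_add_ridge hC2 hξC hsplit, hr0inv y, sum_sum_perturbationCoeff_mul hne]
    ring
  · rw [sum_pd_add_ridge (fun i j => (hC2 i j).differentiable two_ne_zero)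
      (hξC.differentiable two_ne_zero) hsplit, hdiv0 i0 y, sum_perturbationCoeff_mul hne,
      sumCoords_apply, zero_add]

/-- Step 1 of the density proof: perturbing `a⁰₁₁` and `a⁰₂₂`
by `±δξ(y₁+y₂)/r⁰` keeps `r⁰` an invariant density but produces
`∂_{y_i}(a¹_{i1} r⁰) = δ ξ'(y₁+y₂)`. -/
theorem perturbation_step_one {n : ℕ} (hn : 2 ≤ n)
    (i0 i1 : Fin n) (hi0 : (i0 : ℕ) = 0) (hi1 : (i1 : ℕ) = 1)
    (a0 : Fin n → Fin n → (Fin n → ℝ) → ℝ) (hA0 : IsAdmissible a0)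
    (r0 : (Fin n → ℝ) → ℝ) (hr0 : IsInvariantMeasure a0 r0)
    (hdiv0 : ∀ (j : Fin n) (y : Fin n → ℝ),
      (∑ i, pd (fun x => a0 i j x * r0 x) i y) = 0)
    (ξ : ℝ → ℝ) (hξC : ContDiff ℝ 2 ξ) (hξper : ∀ t : ℝ, ξ (t + 1) = ξ t)
    (δ : ℝ) (hδ : 0 < δ)
    (a1 : Fin n → Fin n → (Fin n → ℝ) → ℝ)
    (ha1_00 : ∀ y, a1 i0 i0 y = a0 i0 i0 y + δ * ξ (y i0 + y i1) / r0 y)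
    (ha1_11 : ∀ y, a1 i1 i1 y = a0 i1 i1 y - δ * ξ (y i0 + y i1) / r0 y)
    (ha1_other : ∀ i j, ¬(i = i0 ∧ j = i0) → ¬(i = i1 ∧ j = i1) →
      ∀ y, a1 i j y = a0 i j y) :
    (∀ y, ∑ i, ∑ j, pd2 (fun x => a1 i j x * r0 x) i j y = 0) ∧
    (∀ y, (∑ i, pd (fun x => a1 i i0 x * r0 x) i y) = δ * deriv ξ (y i0 + y i1)) :=
  perturbation_step_one_general i0 i1 hi0 hi1 a0 hA0 r0 hr0 hdiv0 ξ hξC δ a1 ha1_00 ha1_11 ha1_other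
end
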